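/- Every k-vertex-critical (P_3 + P_1)-free graph G satisfies α(G) ≤ 2 and |V(G)| ≤ 2k − 1, for all k ≥ 1. -/

import Mathlib

open SimpleGraph

/-- `G` is `k`-vertex-critical: `χ(G) = k` and deleting any vertex decreases `χ`. -/
def IsKVertexCritical {V : Type*} (G : SimpleGraph V) (k : ℕ) : Prop :=
  G.chromaticNumber = k ∧ ∀ v : V, (G.induce ({v}ᶜ : Set V)).chromaticNumber < k

/-- `G` has no induced subgraph isomorphic to `H`. -/
def InducedFree {V W : Type*} (G : SimpleGraph V) (H : SimpleGraph W) : Prop :=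
  ∀ s : Set V, IsEmpty (G.induce s ≃g H)

/-- `s` is an independent set of `G`. -/
def IsIndepSet {V : Type*} (G : SimpleGraph V) (s : Set V) : Prop :=
  s.Pairwise fun a b => ¬ G.Adj a b

/-- The graph `P_2 + ℓ P_1`: an edge together with `ℓ` isolated vertices. -/
def P2lP1 (ℓ : ℕ) : SimpleGraph (Fin (ℓ + 2)) := fromEdgeSet {s(0, 1)}

/-- The graph `P_3 + P_1`: a path on three vertices plus an isolated vertex. -/
def P3P1 : SimpleGraph (Fin 4) := fromEdgeSet {s(0, 1), s(1, 2)}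

/-- The paw: a triangle with a pendant vertex. -/
def paw : SimpleGraph (Fin 4) := fromEdgeSet {s(0, 1), s(0, 2), s(1, 2), s(2, 3)}

/-- The join of two graphs: all edges between the two sides are added. -/
def joinG {α β : Type*} (G : SimpleGraph α) (H : SimpleGraph β) : SimpleGraph (α ⊕ β) where
  Adj x y :=
    match x, y with
    | Sum.inl a, Sum.inl b => G.Adj a b
    | Sum.inr a, Sum.inr b => H.Adj a b
    | Sum.inl _, Sum.inr _ => True
    | Sum.inr _, Sum.inl _ => True
  symm := by
    refine ⟨?_⟩
    rintro (a | a) (b | b) h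
    · exact G.adj_symm h
    · trivial
    · trivial
    · exact H.adj_symm h
  loopless := by
    refine ⟨?_⟩
    rintro (a | a) h
    · exact G.irrefl h
    · exact H.irrefl h

/-!
Let `a, b, c` be pairwise non-adjacent and let `S_a` be the neighbours of `a` adjacent to neither
`b` nor `c` (similarly `S_b`). In a `(P₃ + P₁)`-free graph a common neighbour of two non-adjacent
vertices is adjacent to all of their common non-neighbours. Hence `{b} ∪ S_b` is a clique, and
every neighbour of `a` outside `S_a` is adjacent to all of it. If `|S_a| ≤ |S_b|`, a
`(k-1)`-colouring of `G - a` uses some colour on `{b} ∪ S_b` that is absent from `S_a`, and `a` can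
take that colour: this contradicts `χ(G) = k`. So `α(G) ≤ 2`, and the `k - 1` colour classes of `G - v` have at most
two vertices each.
-/

section
variable {V : Type*} {G : SimpleGraph V}

theorem SimpleGraph.IsIndepSet.image_val {s : Set V} {t : Set s} (ht : (G.induce s).IsIndepSet t) :
    G.IsIndepSet (Subtype.val '' t) := by
  rintro _ ⟨x, hx, rfl⟩ _ ⟨y, hy, rfl⟩ hxy
  exact ht hx hy (ne_of_apply_ne _ hxy)

theorem SimpleGraph.Coloring.card_le_mul_of_forall_isIndepSet_ncard_le [Fintype V] {β : Type*}
    [Fintype β] (C : G.Coloring β) {m : ℕ} (hα : ∀ s, G.IsIndepSet s → s.ncard ≤ m) :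
    Fintype.card V ≤ m * Fintype.card β := by
  classical
  refine Finset.card_le_mul_card_image_of_maps_to (f := C) (fun _ _ ↦ Finset.mem_univ _) m
    fun b _ ↦ ?_
  simpa [Set.ncard_eq_toFinset_card', Coloring.colorClass] using hα _ (C.isIndepSet_colorClass b)

theorem SimpleGraph.colorable_of_colorable_induce_compl_of_isClique {n : ℕ} {a : V} {K : Set V}
    (hK : G.IsClique K) (haK : a ∉ K)
    (hcard : {w | G.Adj a w ∧ ∃ u ∈ K, ¬ G.Adj w u}.encard < K.encard)
    (hcol : (G.induce {a}ᶜ).Colorable n) : G.Colorable n := by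
  classical
  obtain ⟨ψ⟩ := hcol
  let ι : K → ({a}ᶜ : Set V) := fun u ↦ ⟨u, ne_of_mem_of_not_mem u.2 haK⟩
  have hinj : ∀ u₁ u₂ : K, ψ (ι u₁) = ψ (ι u₂) → u₁ = u₂ := fun u₁ u₂ h ↦ by
    by_contra hne
    exact ψ.valid (show (G.induce {a}ᶜ).Adj (ι u₁) (ι u₂) from
      hK u₁.2 u₂.2 (Subtype.coe_ne_coe.2 hne)) h
  -- `K` shows `K.encard` distinct colours, more than there are neighbours of `a` not complete
  -- to `K`.
  obtain ⟨u, hu⟩ : ∃ u : K, ∀ w (hw : w ≠ a), G.Adj a w → (∃ u ∈ K, ¬ G.Adj w u) →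
      ψ ⟨w, hw⟩ ≠ ψ (ι u) := by
    by_contra! h
    choose f hfa hfadj hfK hfψ using h
    refine hcard.not_ge (ENat.card_le_card_of_injective
      (f := fun u ↦ (⟨f u, hfadj u, hfK u⟩ : {w | G.Adj a w ∧ ∃ u ∈ K, ¬ G.Adj w u})) ?_)
    intro u₁ u₂ h12
    refine hinj u₁ u₂ ?_
    rw [← hfψ, ← hfψ]
    simp_all
  have hnbr : ∀ w (hw : w ≠ a), G.Adj a w → ψ ⟨w, hw⟩ ≠ ψ (ι u) := fun w hw haw ↦ by
    by_cases hwK : ∃ u ∈ K, ¬ G.Adj w u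
    · exact hu w hw haw hwK
    · push Not at hwK
      exact ψ.valid (hwK u u.2)
  refine ⟨Coloring.mk (fun v ↦ if hv : v = a then ψ (ι u) else ψ ⟨v, hv⟩) ?_⟩
  intro v w hvw
  by_cases hv : v = a <;> by_cases hw : w = a
  · exact absurd hvw (by simp [hv, hw])
  · subst hv; simpa [hw] using (hnbr w hw hvw).symm
  · subst hw; simpa [hv] using hnbr v hv hvw.symm
  · simpa [hv, hw] using ψ.valid (show (G.induce {a}ᶜ).Adj ⟨v, hv⟩ ⟨w, hw⟩ from hvw)

theorem IsKVertexCritical.pos {k : ℕ} (hcrit : IsKVertexCritical G k) (v : V) : 0 < k :=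
  Nat.pos_of_ne_zero fun hk ↦ by simpa [hk] using hcrit.2 v

theorem IsKVertexCritical.colorable_induce_compl {k : ℕ} (hcrit : IsKVertexCritical G k) (v : V) :
    (G.induce {v}ᶜ).Colorable (k - 1) := by
  obtain ⟨m, rfl⟩ := Nat.exists_eq_add_one.2 (hcrit.pos v)
  rw [Nat.add_sub_cancel, ← chromaticNumber_le_iff_colorable]
  exact ENat.lt_natCast_add_one_iff.1 (mod_cast hcrit.2 v)

theorem IsKVertexCritical.not_colorable {k : ℕ} (hcrit : IsKVertexCritical G k) (v : V) :
    ¬ G.Colorable (k - 1) := fun h ↦ by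
  have := h.chromaticNumber_le
  rw [hcrit.1, Nat.cast_le] at this
  have := hcrit.pos v
  omega

theorem InducedFree.not_isIndContained {W : Type*} {H : SimpleGraph W} (hfree : InducedFree G H) :
    ¬ H ⊴ G := fun hH ↦
  let ⟨s, ⟨e⟩⟩ := isIndContained_iff_exists_iso_induce.1 hH
  (hfree s).false e.symm

theorem InducedFree.adj_of_commonNeighbor (hfree : InducedFree G P3P1) {x y z w : V}
    (hxz : x ≠ z) (nxz : ¬ G.Adj x z) (hxy : G.Adj x y) (hzy : G.Adj z y)
    (nxw : ¬ G.Adj x w) (nzw : ¬ G.Adj z w) : G.Adj y w := by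
  by_contra nyw
  have hwx : w ≠ x := by rintro rfl; exact nyw hxy.symm
  have hwz : w ≠ z := by rintro rfl; exact nyw hzy.symm
  have hwy : w ≠ y := by rintro rfl; exact nxw hxy
  have hxy_ne := G.ne_of_adj hxy
  have hzy_ne := G.ne_of_adj hzy
  refine hfree.not_isIndContained ⟨⟨⟨![x, y, z, w], ?_⟩, ?_⟩⟩
  · intro i j hij
    fin_cases i <;> fin_cases j <;> simp_all [eq_comm]
  · intro i j
    change G.Adj (![x, y, z, w] i) (![x, y, z, w] j) ↔ _
    fin_cases i <;> fin_cases j <;> simp [P3P1, G.adj_comm, hxy, hzy.symm, nxz, nxw, nzw, nyw]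

def privateNeighborSet (G : SimpleGraph V) (a b c : V) : Set V :=
  {x | G.Adj a x ∧ ¬ G.Adj b x ∧ ¬ G.Adj c x}

theorem InducedFree.adj_of_adj_of_notMem_privateNeighborSet (hfree : InducedFree G P3P1)
    {a b c w : V} (hab : a ≠ b) (hac : a ≠ c) (nab : ¬ G.Adj a b) (nac : ¬ G.Adj a c)
    (nbc : ¬ G.Adj b c) (haw : G.Adj a w) (hw : w ∉ privateNeighborSet G a b c) :
    G.Adj b w ∧ G.Adj c w := by
  by_cases hbw : G.Adj b w
  · exact ⟨hbw, (hfree.adj_of_commonNeighbor hab nab haw hbw nac nbc).symm⟩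
  · have hcw : G.Adj c w := by_contra fun hcw ↦ hw ⟨haw, hbw, hcw⟩
    exact ⟨(hfree.adj_of_commonNeighbor hac nac haw hcw nab (nbc ∘ .symm)).symm, hcw⟩

theorem InducedFree.isClique_insert_privateNeighborSet (hfree : InducedFree G P3P1)
    {a b c : V} (nbc : ¬ G.Adj b c) : G.IsClique (insert b (privateNeighborSet G b a c)) := by
  refine isClique_insert.2 ⟨fun u hu w hw huw ↦ ?_, fun u hu _ ↦ hu.1⟩
  by_contra nuw
  exact nbc (hfree.adj_of_commonNeighbor huw nuw hu.1.symm hw.1.symm (hu.2.2 ∘ .symm)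
    (hw.2.2 ∘ .symm))

theorem InducedFree.setOf_adj_exists_not_adj_subset (hfree : InducedFree G P3P1)
    {a b c : V} (hab : a ≠ b) (hac : a ≠ c) (nab : ¬ G.Adj a b) (nac : ¬ G.Adj a c)
    (nbc : ¬ G.Adj b c) :
    {w | G.Adj a w ∧ ∃ u ∈ insert b (privateNeighborSet G b a c), ¬ G.Adj w u} ⊆
      privateNeighborSet G a b c := by
  rintro w ⟨haw, u, hu, nwu⟩
  by_contra hw
  obtain ⟨hbw, hcw⟩ := hfree.adj_of_adj_of_notMem_privateNeighborSet hab hac nab nac nbc haw hw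
  rcases hu with rfl | hu
  · exact nwu hbw.symm
  · exact nwu (hfree.adj_of_commonNeighbor hac nac haw hcw hu.2.1 hu.2.2)

theorem InducedFree.colorable_of_ncard_privateNeighborSet_le [Finite V]
    (hfree : InducedFree G P3P1) {n : ℕ} {a b c : V} (hab : a ≠ b) (hac : a ≠ c)
    (nab : ¬ G.Adj a b) (nac : ¬ G.Adj a c) (nbc : ¬ G.Adj b c)
    (hcard : (privateNeighborSet G a b c).ncard ≤ (privateNeighborSet G b a c).ncard)
    (hcol : (G.induce {a}ᶜ).Colorable n) : G.Colorable n := by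
  refine colorable_of_colorable_induce_compl_of_isClique
    (hfree.isClique_insert_privateNeighborSet (a := a) nbc) ?_ ?_ hcol
  · rintro (rfl | ha)
    exacts [hab rfl, nab ha.1.symm]
  · have hbS : b ∉ privateNeighborSet G b a c := fun h ↦ G.irrefl h.1
    rw [← (Set.toFinite _).cast_ncard_eq, ← (Set.toFinite _).cast_ncard_eq, Nat.cast_lt]
    calc _ ≤ (privateNeighborSet G a b c).ncard :=
          Set.ncard_le_ncard (hfree.setOf_adj_exists_not_adj_subset hab hac nab nac nbc)
      _ ≤ (privateNeighborSet G b a c).ncard := hcard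
      _ < _ := by rw [Set.ncard_insert_of_notMem hbS]; omega

theorem IsKVertexCritical.ncard_le_two_of_isIndepSet [Finite V] {k : ℕ}
    (hcrit : IsKVertexCritical G k) (hfree : InducedFree G P3P1) {s : Set V}
    (hs : _root_.IsIndepSet G s) : s.ncard ≤ 2 := by
  by_contra! h
  obtain ⟨t, hts, ht⟩ := Set.exists_subset_card_eq (show 3 ≤ s.ncard by omega)
  obtain ⟨a, b, c, hab, hac, hbc, rfl⟩ := Set.ncard_eq_three.1 ht
  have nab : ¬ G.Adj a b := hs (hts (by simp)) (hts (by simp)) hab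
  have nac : ¬ G.Adj a c := hs (hts (by simp)) (hts (by simp)) hac
  have nbc : ¬ G.Adj b c := hs (hts (by simp)) (hts (by simp)) hbc
  rcases le_total (privateNeighborSet G a b c).ncard (privateNeighborSet G b a c).ncard with h | h
  · exact hcrit.not_colorable a <| hfree.colorable_of_ncard_privateNeighborSet_le hab hac
      nab nac nbc h (hcrit.colorable_induce_compl a)
  · exact hcrit.not_colorable b <| hfree.colorable_of_ncard_privateNeighborSet_le hab.symm hbc
      (nab ∘ .symm) nbc nac h (hcrit.colorable_induce_compl b)

end

theorem vertex_critical_P3P1_free_structure_general {V : Type} [Fintype V] (G : SimpleGraph V)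
    (k : ℕ) (hcrit : IsKVertexCritical G k) (hfree : InducedFree G P3P1) :
    (∀ s : Set V, _root_.IsIndepSet G s → s.ncard ≤ 2) ∧ Fintype.card V ≤ 2 * k - 1 := by
  classical
  have hα : ∀ s : Set V, _root_.IsIndepSet G s → s.ncard ≤ 2 :=
    fun s hs ↦ hcrit.ncard_le_two_of_isIndepSet hfree hs
  refine ⟨hα, ?_⟩
  rcases isEmpty_or_nonempty V with _ | ⟨⟨v⟩⟩
  · simp
  obtain ⟨C⟩ := hcrit.colorable_induce_compl v
  have hcard := C.card_le_mul_of_forall_isIndepSet_ncard_le fun t ht ↦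
    Set.ncard_image_of_injective t Subtype.val_injective ▸ hα _ ht.image_val
  rw [Fintype.card_fin, Fintype.card_compl_set, Set.card_singleton] at hcard
  have := hcrit.pos v
  omega

theorem vertex_critical_P3P1_free_structure {V : Type} [Fintype V] (G : SimpleGraph V)
    (k : ℕ) (hk : 1 ≤ k) (hcrit : IsKVertexCritical G k) (hfree : InducedFree G P3P1) :
    (∀ s : Set V, _root_.IsIndepSet G s → s.ncard ≤ 2) ∧ Fintype.card V ≤ 2 * k - 1 :=
  vertex_critical_P3P1_free_structure_general G k hcrit hfree
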